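/- In the Zorn algebra 𝒵, if a, b ∈ 𝒵 \ {0} satisfy b·a = 0, then a·(x·b̄) ∈ ℝ·b̄ for every x ∈ 𝒵; more precisely a·(x·b̄) = 2 Re(a·x)·b̄ where Re(z) = ⟨z, 1⟩. -/

import Mathlib

open Matrix

/-- The Zorn vector-matrix algebra `𝒵 = ℝ × ℝ³ × ℝ³ × ℝ`, elements `(a, x, y, b)`. -/
abbrev Zorn : Type := ℝ × (Fin 3 → ℝ) × (Fin 3 → ℝ) × ℝ

/-- The Zorn product. -/
def zmul (Z W : Zorn) : Zorn :=
  (Z.1 * W.1 + Z.2.1 ⬝ᵥ W.2.2.1,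
   Z.1 • W.2.1 + W.2.2.2 • Z.2.1 - Z.2.2.1 ⨯₃ W.2.2.1,
   W.1 • Z.2.2.1 + Z.2.2.2 • W.2.2.1 + Z.2.1 ⨯₃ W.2.1,
   W.2.1 ⬝ᵥ Z.2.2.1 + Z.2.2.2 * W.2.2.2)

/-- The norm `N(a, x, y, b) = ab − x·y`. -/
def zN (Z : Zorn) : ℝ := Z.1 * Z.2.2.2 - Z.2.1 ⬝ᵥ Z.2.2.1

/-- Conjugation `(a, x, y, b) ↦ (b, −x, −y, a)`. -/
def zconj (Z : Zorn) : Zorn := (Z.2.2.2, -Z.2.1, -Z.2.2.1, Z.1)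

/-- The unit `1 = (1, 0, 0, 1)`. -/
def zone : Zorn := (1, 0, 0, 1)

/-- The symmetric bilinear form obtained by polarizing the norm. -/
noncomputable def zinner (Z W : Zorn) : ℝ := (zN (Z + W) - zN Z - zN W) / 2

/-- The real part `Re(z) = ⟨z, 1⟩`. -/
noncomputable def zRe (Z : Zorn) : ℝ := zinner Z zone

/-!
The Zorn algebra is a composition algebra, and linearizing `(z ȳ) y = N(y) z` in `y` gives
`(z ȳ) w + (z w̄) y = 2 ⟨w, y⟩ z`. Taking `z = b`, `y = x`, `w = ā`, the second term is
`(b a) x = 0`, so `(b x̄) ā = 2 ⟨ā, x⟩ b`. Conjugation is an anti-automorphism, so conjugating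
turns the left side into `a (x b̄)`, and `⟨ā, x⟩ = Re(a x)`.
-/

theorem zconj_zconj (Z : Zorn) : zconj (zconj Z) = Z := by
  simp [zconj]

theorem zconj_smul (c : ℝ) (Z : Zorn) : zconj (c • Z) = c • zconj Z := by
  simp [zconj]

theorem zero_zmul (Z : Zorn) : zmul 0 Z = 0 := by
  simp [zmul]

theorem zconj_zmul (Z W : Zorn) : zconj (zmul Z W) = zmul (zconj W) (zconj Z) := by
  ext i <;> (try fin_cases i) <;>
    simp only [zconj, zmul, Pi.add_apply, Pi.sub_apply, Pi.neg_apply, Pi.smul_apply, smul_eq_mul,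
      cross_apply, dotProduct, Fin.sum_univ_three, Fin.isValue, Fin.zero_eta, Fin.mk_one,
      Fin.reduceFinMk, cons_val_zero, cons_val_one, cons_val] <;>
    ring

theorem zinner_zconj_eq_zRe (Z W : Zorn) : zinner (zconj Z) W = zRe (zmul Z W) := by
  simp only [zinner, zRe, zN, zconj, zmul, zone, Prod.fst_add, Prod.snd_add, add_dotProduct,
    dotProduct_add, neg_dotProduct, dotProduct_neg, dotProduct_zero, zero_dotProduct]
  ring

theorem zmul_zmul_zconj_add_zmul_zmul_zconj (Z Y W : Zorn) :
    zmul (zmul Z (zconj Y)) W + zmul (zmul Z (zconj W)) Y = (2 * zinner W Y) • Z := by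
  ext i <;> (try fin_cases i) <;>
    simp only [zconj, zmul, zinner, zN, Prod.fst_add, Prod.snd_add, Prod.smul_fst, Prod.smul_snd,
      Pi.add_apply, Pi.sub_apply, Pi.neg_apply, Pi.smul_apply, smul_eq_mul, cross_apply,
      dotProduct, Fin.sum_univ_three, Fin.isValue, Fin.zero_eta, Fin.mk_one, Fin.reduceFinMk,
      cons_val_zero, cons_val_one, cons_val] <;>
    ring

theorem darboux_stmt14_general (a b : Zorn) (hba : zmul b a = 0) :
    ∀ x : Zorn, zmul a (zmul x (zconj b)) = (2 * zRe (zmul a x)) • zconj b ∧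
      ∃ c : ℝ, zmul a (zmul x (zconj b)) = c • zconj b := by
  intro x
  have hconj : zmul (zmul b (zconj x)) (zconj a) = (2 * zRe (zmul a x)) • b := by
    have h := zmul_zmul_zconj_add_zmul_zmul_zconj b x (zconj a)
    rwa [zconj_zconj, hba, zero_zmul, add_zero, zinner_zconj_eq_zRe] at h
  have key : zmul a (zmul x (zconj b)) = (2 * zRe (zmul a x)) • zconj b := by
    rw [← zconj_smul, ← hconj, zconj_zmul, zconj_zmul, zconj_zconj, zconj_zconj]
  exact ⟨key, _, key⟩

/-- if `a, b ≠ 0` and `b·a = 0` in the Zorn algebra, then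
`a·(x·b̄) = 2 Re(a·x)·b̄ ∈ ℝ·b̄` for every `x`. -/
theorem darboux_stmt14 (a b : Zorn) (ha : a ≠ 0) (hb : b ≠ 0)
    (hba : zmul b a = 0) :
    ∀ x : Zorn, zmul a (zmul x (zconj b)) = (2 * zRe (zmul a x)) • zconj b ∧
      ∃ c : ℝ, zmul a (zmul x (zconj b)) = c • zconj b :=
  darboux_stmt14_general a b hba
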